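/- For a ring R, the following conditions are equivalent: (1) R is a semiregular ring and J(R) = Z_r(R); (2) every finitely generated projective right R-module is a CS-Rickart module which is also a C₂ module. -/

import Mathlib

namespace CSRickartPaper

section Defs

variable {R : Type*} [Ring R] {M : Type*} [AddCommGroup M] [Module R M]

/-- `N` is an essential submodule of `P` (inside the ambient module `M`):
`N ≤ P` and every submodule of `P` intersecting `N` trivially is zero. -/
def EssentialIn (N P : Submodule R M) : Prop :=
  N ≤ P ∧ ∀ K : Submodule R M, K ≤ P → N ⊓ K = ⊥ → K = ⊥

/-- `N` is a small (superfluous) submodule of `P`. -/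
def SmallIn (N P : Submodule R M) : Prop :=
  N ≤ P ∧ ∀ K : Submodule R M, K ≤ P → N ⊔ K = P → K = P

/-- `N` is a direct summand of `M`. -/
def IsDirectSummand (N : Submodule R M) : Prop :=
  ∃ K : Submodule R M, IsCompl N K

/-- `N` lies above the direct summand `D` of `M`: `M = D ⊕ K`, `D ≤ N` and
`N ⊓ K` is small in `K`. -/
def LiesAbove (N D : Submodule R M) : Prop :=
  ∃ K : Submodule R M, IsCompl D K ∧ D ≤ N ∧ SmallIn (N ⊓ K) K

/-- `N` lies above a direct summand of `M`. -/
def LiesAboveSummand (N : Submodule R M) : Prop :=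
  ∃ D : Submodule R M, LiesAbove N D

end Defs

section ModuleDefs

variable (R : Type*) [Ring R] (M : Type*) [AddCommGroup M] [Module R M]

/-- `M` is a CS-Rickart module: the kernel of every endomorphism is essential
in a direct summand `eM`, `e` an idempotent endomorphism. -/
def IsCSRickart : Prop :=
  ∀ φ : Module.End R M, ∃ e : Module.End R M, IsIdempotentElem e ∧
    EssentialIn (LinearMap.ker φ) (LinearMap.range e)

/-- `M` is a d-CS-Rickart module: the image of every endomorphism lies above a
direct summand of `M`. -/
def IsDCSRickart : Prop :=
  ∀ φ : Module.End R M, LiesAboveSummand (LinearMap.range φ)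

/-- `M` is a Rickart module. -/
def IsRickart : Prop :=
  ∀ φ : Module.End R M, ∃ e : Module.End R M, IsIdempotentElem e ∧
    LinearMap.ker φ = LinearMap.range e

/-- `M` is a dual Rickart module. -/
def IsDRickart : Prop :=
  ∀ φ : Module.End R M, ∃ e : Module.End R M, IsIdempotentElem e ∧
    LinearMap.range φ = LinearMap.range e

/-- `M` is a CS (extending) module. -/
def IsCSModule : Prop :=
  ∀ N : Submodule R M, ∃ D : Submodule R M, IsDirectSummand D ∧ EssentialIn N D

/-- `M` is a lifting (d-CS) module. -/
def IsLifting : Prop :=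
  ∀ N : Submodule R M, LiesAboveSummand N

/-- `M` is a singular module: the annihilator of every element is an essential
ideal of `R`. -/
def IsSingularModule : Prop :=
  ∀ m : M, EssentialIn (LinearMap.ker (LinearMap.toSpanSingleton R M m)) (⊤ : Submodule R R)

/-- `M` is uniform: every nonzero submodule is essential. -/
def IsUniformModule : Prop :=
  ∀ N : Submodule R M, N ≠ ⊥ → EssentialIn N (⊤ : Submodule R M)

/-- `M` satisfies the C₂ condition: every submodule isomorphic to a direct
summand is itself a direct summand. -/
def IsC2 : Prop :=
  ∀ N D : Submodule R M, IsDirectSummand D → Nonempty (N ≃ₗ[R] D) → IsDirectSummand N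

/-- `M` is K-nonsingular. -/
def IsKNonsingular : Prop :=
  ∀ φ : Module.End R M, ∀ N : Submodule R M, EssentialIn N (⊤ : Submodule R M) →
    N ≤ LinearMap.ker φ → φ = 0

/-- `M` is T-noncosingular. -/
def IsTNoncosingular : Prop :=
  ∀ φ : Module.End R M, φ ≠ 0 → ¬ SmallIn (LinearMap.range φ) (⊤ : Submodule R M)

/-- `M` is an SIP-CS module. -/
def IsSIPCS : Prop :=
  ∀ A B : Submodule R M, IsDirectSummand A → IsDirectSummand B →
    ∃ D : Submodule R M, IsDirectSummand D ∧ EssentialIn (A ⊓ B) D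

/-- `M` is an SSP-d-CS module. -/
def IsSSPdCS : Prop :=
  ∀ A B : Submodule R M, IsDirectSummand A → IsDirectSummand B →
    LiesAboveSummand (A ⊔ B)

end ModuleDefs

section RelDefs

variable (R : Type*) [Ring R] (M N : Type*) [AddCommGroup M] [Module R M]
  [AddCommGroup N] [Module R N]

/-- `M` is relatively CS-Rickart to `N`. -/
def IsRelCSRickart : Prop :=
  ∀ φ : M →ₗ[R] N, ∃ e : Module.End R M, IsIdempotentElem e ∧
    EssentialIn (LinearMap.ker φ) (LinearMap.range e)

/-- `M` is relatively d-CS-Rickart to `N`. -/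
def IsRelDCSRickart : Prop :=
  ∀ φ : M →ₗ[R] N, LiesAboveSummand (LinearMap.range φ)

/-- `N` is `M`-injective. -/
def IsRelInjective : Prop :=
  ∀ (A : Submodule R M) (f : A →ₗ[R] N), ∃ g : M →ₗ[R] N, ∀ a : A, g a = f a

end RelDefs

section RingDefs

variable (R : Type*) [Ring R]

/-- The annihilator of an element `a` of `R`, as an ideal (kernel of `r ↦ r • a`). -/
def annElem (a : R) : Submodule R R :=
  LinearMap.ker (LinearMap.toSpanSingleton R R a)

/-- The annihilator of a subset `X` of `R`. -/
def annSet (X : Set R) : Submodule R R :=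
  ⨅ x ∈ X, annElem R x

/-- The principal ideal generated by `e`, i.e. the image of `r ↦ r • e`. -/
def idealGen (e : R) : Submodule R R :=
  LinearMap.range (LinearMap.toSpanSingleton R R e)

/-- `R` is an ACS ring: the annihilator of every element is essential in a
direct summand `eR` of `R`. -/
def IsACSRing : Prop :=
  ∀ a : R, ∃ e : R, IsIdempotentElem e ∧ EssentialIn (annElem R a) (idealGen R e)

/-- `R` is an essentially Baer ring. -/
def IsEssentiallyBaer : Prop :=
  ∀ X : Set R, X.Nonempty → ∃ e : R, IsIdempotentElem e ∧
    EssentialIn (annSet R X) (idealGen R e)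

/-- The Jacobson radical of the ring `R`. -/
noncomputable def jacRad : Ideal R := Ideal.jacobson (⊥ : Ideal R)

/-- `R` is semiregular: `R/J(R)` is von Neumann regular and idempotents lift
modulo `J(R)` (stated elementwise). -/
def IsSemiregularRing : Prop :=
  (∀ a : R, ∃ b : R, a - a * b * a ∈ jacRad R) ∧
  (∀ a : R, a - a * a ∈ jacRad R →
    ∃ e : R, IsIdempotentElem e ∧ e - a ∈ jacRad R)

/-- `J(R)` coincides with the singular ideal `Z(R)`. -/
def JacEqSingular : Prop :=
  ∀ a : R, a ∈ jacRad R ↔ EssentialIn (annElem R a) (⊤ : Submodule R R)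

end RingDefs

section GenDefs

variable {R : Type*} [Ring R] {M : Type*} [AddCommGroup M] [Module R M]

/-- A submodule is `n`-generated if it is spanned by at most `n` elements. -/
def NGen (n : ℕ) (N : Submodule R M) : Prop :=
  ∃ f : Fin n → M, Submodule.span R (Set.range f) = N

end GenDefs

end CSRickartPaper

/-!
Mathlib modules are left modules, so the paper's right ideals `aR` appear here as left ideals
`R a`, and endomorphisms of `R` as right multiplications.

(⇐) Applied to `R` itself, CS-Rickart and C₂ give for every `a` an idempotent `g ∈ R a` with
`a - a g` singular, and make `1 - z` left invertible for singular `z`, so `Z(R) ⊆ J(R)`. An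
idempotent in `J(R)` is zero, so `a ∈ J(R)` forces `g = 0` and `a ∈ Z(R)`; regularity modulo
`J(R)` and lifting of idempotents follow from `a - a g ∈ J(R)`.

(⇒) By Nicholson, every `R a` contains an idempotent `e` with `a - a e ∈ J(R) = Z(R)`. Using
projectivity this passes to finite sums and retracts: every finitely generated submodule `N` of a
finitely generated projective `P` is `p P ⊕ (N ∩ ker p)` with `p` idempotent and `N ∩ ker p`
singular. A map out of `P` with singular image has essential kernel. For `N = φ P` this makes
`ker φ` essential in the summand `ker (s p φ)`, where `φ s = p` (CS-Rickart). If `N` is isomorphic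
to a summand, it is itself finitely generated projective, so its singular summand vanishes and
`N = p P` (C₂).
-/

namespace CSRickartPaper

open LinearMap

section Singular

open Submodule

variable {R : Type*} [Ring R] {M M' : Type*} [AddCommGroup M] [Module R M]
  [AddCommGroup M'] [Module R M']

theorem essentialIn_top_iff {N : Submodule R M} :
    EssentialIn N ⊤ ↔ ∀ x : M, x ≠ 0 → ∃ r : R, r • x ≠ 0 ∧ r • x ∈ N := by
  refine ⟨fun h x hx => ?_,
    fun h => ⟨le_top, fun K _ hK => (Submodule.eq_bot_iff K).2 fun x hxK => ?_⟩⟩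
  · by_contra! hN
    have hxN : N ⊓ (R ∙ x) = ⊥ := (Submodule.eq_bot_iff _).2 fun y ⟨hyN, hyx⟩ => by
      obtain ⟨r, rfl⟩ := mem_span_singleton.1 hyx
      exact not_not.1 fun hr => hN r hr hyN
    exact hx (span_singleton_eq_bot.1 (h.2 _ le_top hxN))
  · by_contra hx
    obtain ⟨r, hr, hrN⟩ := h x hx
    have hrx : r • x ∈ N ⊓ K := ⟨hrN, K.smul_mem r hxK⟩
    rw [hK] at hrx
    exact hr hrx

theorem EssentialIn.comap {N P : Submodule R M} (h : EssentialIn N P) (f : M' →ₗ[R] M)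
    (hf : range f ≤ P) : EssentialIn (N.comap f) ⊤ := by
  refine essentialIn_top_iff.2 fun x hx => ?_
  by_cases hfx : f x = 0
  · exact ⟨1, by simpa using hx, by simp [hfx]⟩
  have hne : N ⊓ (R ∙ f x) ≠ ⊥ := fun hbot =>
    hfx (span_singleton_eq_bot.1 (h.2 _ (span_le.2 (by simpa using hf ⟨x, rfl⟩)) hbot))
  obtain ⟨y, ⟨hyN, hyx⟩, hy⟩ := exists_mem_ne_zero_of_ne_bot hne
  obtain ⟨r, rfl⟩ := mem_span_singleton.1 hyx
  exact ⟨r, fun h0 => hy (by rw [← map_smul, h0, map_zero]), by simpa using hyN⟩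

theorem EssentialIn.mono {N N' : Submodule R M} (h : EssentialIn N ⊤) (hle : N ≤ N') :
    EssentialIn N' ⊤ :=
  ⟨le_top, fun K hK hN'K => h.2 K hK (le_bot_iff.1 (hN'K ▸ inf_le_inf_right K hle))⟩

theorem EssentialIn.inf {N N' : Submodule R M} (h : EssentialIn N ⊤) (h' : EssentialIn N' ⊤) :
    EssentialIn (N ⊓ N') ⊤ := by
  refine ⟨le_top, fun K _ hK => h.2 K le_top (h'.2 (N ⊓ K) le_top ?_)⟩
  rwa [← inf_assoc, inf_comm N']

theorem essentialIn_top_iInf {ι : Type*} [Fintype ι] {N : ι → Submodule R M}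
    (h : ∀ i, EssentialIn (N i) ⊤) : EssentialIn (⨅ i, N i) ⊤ := by
  rw [← Finset.inf_univ_eq_iInf]
  exact Finset.inf_induction (p := fun N => EssentialIn N ⊤)
    ⟨le_rfl, fun K _ hK => by simpa using hK⟩ (fun _ ha _ hb => ha.inf hb) fun i _ => h i

variable (R M) in
def singularSubmodule : Submodule R M where
  carrier := {m | EssentialIn (ker (toSpanSingleton R M m)) ⊤}
  add_mem' {a b} ha hb := (EssentialIn.inf ha hb).mono
    fun r ⟨(hra : r • a = 0), (hrb : r • b = 0)⟩ =>
      show r • (a + b) = 0 by rw [smul_add, hra, hrb, add_zero]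
  zero_mem' := ⟨le_top, fun K _ hK => by simpa using hK⟩
  smul_mem' s m hm := (EssentialIn.comap hm (toSpanSingleton R R s) le_top).mono fun r hr => by
    simp only [mem_comap, mem_ker, toSpanSingleton_apply, smul_eq_mul, mul_smul] at hr ⊢
    exact hr

theorem map_mem_singularSubmodule (f : M →ₗ[R] M') {m : M} (hm : m ∈ singularSubmodule R M) :
    f m ∈ singularSubmodule R M' :=
  EssentialIn.mono hm fun r (hr : r • m = 0) => show r • f m = 0 by rw [← map_smul, hr, map_zero]

theorem map_singularSubmodule_le (f : M →ₗ[R] M') :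
    (singularSubmodule R M).map f ≤ singularSubmodule R M' :=
  Submodule.map_le_iff_le_comap.2 fun _ hm => map_mem_singularSubmodule f hm

theorem mem_singularSubmodule_of_injective {f : M →ₗ[R] M'} (hf : Function.Injective f) {m : M}
    (hm : f m ∈ singularSubmodule R M') : m ∈ singularSubmodule R M :=
  EssentialIn.mono hm fun r (hr : r • f m = 0) => show r • m = 0 from
    hf (by rw [map_smul, hr, map_zero])

theorem Prod.mk_mem_singularSubmodule {M₁ M₂ : Type*} [AddCommGroup M₁] [Module R M₁]
    [AddCommGroup M₂] [Module R M₂] {m₁ : M₁} {m₂ : M₂} (h₁ : m₁ ∈ singularSubmodule R M₁)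
    (h₂ : m₂ ∈ singularSubmodule R M₂) : (m₁, m₂) ∈ singularSubmodule R (M₁ × M₂) := by
  simpa using add_mem (map_mem_singularSubmodule (inl R M₁ M₂) h₁)
    (map_mem_singularSubmodule (inr R M₁ M₂) h₂)

theorem mul_mem_singularSubmodule {z : R} (hz : z ∈ singularSubmodule R R) (c : R) :
    z * c ∈ singularSubmodule R R := by
  simpa using map_mem_singularSubmodule (toSpanSingleton R R c) hz

theorem eq_zero_of_eq_mul_of_mem_singularSubmodule {y z : R} (hz : z ∈ singularSubmodule R R)
    (h : y = y * z) : y = 0 := by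
  by_contra hy
  obtain ⟨r, hr, hrz⟩ := essentialIn_top_iff.1 hz y hy
  refine hr ?_
  simpa [mul_assoc, ← h] using hrz

end Singular

section Jacobson

variable {R : Type*} [Ring R]

instance : (jacRad R).IsTwoSided := by
  rw [jacRad, Ideal.jacobson_bot]
  infer_instance

theorem exists_mul_one_add_eq_one_of_mem_jacRad {j : R} (hj : j ∈ jacRad R) :
    ∃ z : R, z * (1 + j) = 1 := by
  obtain ⟨z, hz⟩ := Ideal.mem_jacobson_iff.1 hj 1
  refine ⟨z, ?_⟩
  rwa [Submodule.mem_bot, sub_eq_zero, mul_one, add_comm, ← mul_one_add] at hz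

theorem isUnit_one_add_of_mem_jacRad {j : R} (hj : j ∈ jacRad R) : IsUnit (1 + j) := by
  obtain ⟨z, hz⟩ := exists_mul_one_add_eq_one_of_mem_jacRad hj
  obtain ⟨w, hw⟩ :=
    exists_mul_one_add_eq_one_of_mem_jacRad (neg_mem ((jacRad R).mul_mem_left z hj))
  have hz' : 1 + -(z * j) = z := by
    calc 1 + -(z * j) = z * (1 + j) + -(z * j) := by rw [hz]
      _ = z := by noncomm_ring
  rw [hz'] at hw
  have hwj : w = 1 + j := by
    calc w = w * (z * (1 + j)) := by rw [hz, mul_one]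
      _ = 1 + j := by rw [← mul_assoc, hw, one_mul]
  exact ⟨⟨1 + j, z, hwj ▸ hw, hz⟩, rfl⟩

theorem IsIdempotentElem.eq_zero_of_mem_jacRad {e : R} (he : IsIdempotentElem e)
    (hJ : e ∈ jacRad R) : e = 0 := by
  have hu : IsUnit (1 - e) := by
    simpa [sub_eq_add_neg] using isUnit_one_add_of_mem_jacRad (neg_mem hJ)
  exact hu.mul_right_eq_zero.1 (by rw [sub_mul, one_mul, he.eq, sub_self])

theorem exists_idempotent_sub_mem_jacRad_of_sub_mem_jacRad {a g : R} (hg : IsIdempotentElem g)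
    (hag : a - a * g ∈ jacRad R) (hga : g - g * a ∈ jacRad R) :
    ∃ e : R, IsIdempotentElem e ∧ e - a ∈ jacRad R := by
  have hg' : g * (1 - g) = 0 := by rw [mul_sub, mul_one, hg.eq, sub_self]
  refine ⟨g + (1 - g) * a * g, ?_, ?_⟩
  · have : (g + (1 - g) * a * g) * (g + (1 - g) * a * g) =
        g * g + g * (1 - g) * a * g + (1 - g) * a * (g * g) +
          (1 - g) * a * (g * (1 - g)) * a * g := by noncomm_ring
    rw [IsIdempotentElem, this, hg', hg.eq]
    simp
  · have : g + (1 - g) * a * g - a = (g - g * a) * g - (a - a * g) := by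
      rw [sub_mul g, hg.eq]; noncomm_ring
    rw [this]
    exact sub_mem ((jacRad R).mul_mem_right g hga) hag

/-- Nicholson's characterisation of semiregular rings. -/
theorem exists_idempotent_sub_mul_mem_jacRad (hsr : IsSemiregularRing R) (a : R) :
    ∃ e c : R, IsIdempotentElem e ∧ e = c * a ∧ a - a * e ∈ jacRad R := by
  obtain ⟨b, hb⟩ := hsr.1 a
  have hx : b * a - b * a * (b * a) ∈ jacRad R := by
    convert (jacRad R).mul_mem_left b hb using 1
    noncomm_ring
  obtain ⟨h, hh, hhx⟩ := hsr.2 (b * a) hx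
  -- `u = 1 + j = h * (b * a) + (1 - h) * (1 - b * a)` is a unit because `b * a ≡ h` modulo `J`;
  -- conjugating `h` by `u` gives an idempotent in `R a` that is still `≡ b * a`
  set j := (h + h - 1) * (b * a - h)
  have hj : j ∈ jacRad R := (jacRad R).mul_mem_left _ (by simpa using neg_mem hhx)
  obtain ⟨u, hu⟩ := isUnit_one_add_of_mem_jacRad hj
  have hhu : h * u = h * b * a := by
    have : h * (h + h - 1) = h := by rw [mul_sub, mul_add, hh.eq, mul_one, add_sub_cancel_right]
    rw [hu, mul_add, mul_one, ← mul_assoc, this, mul_sub, hh.eq, add_sub_cancel, mul_assoc]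
  have he : ↑u⁻¹ * h * u - h ∈ jacRad R := by
    have : ↑u⁻¹ * h * u - h = ↑u⁻¹ * (h * j - j * h) := by
      calc ↑u⁻¹ * h * u - h = ↑u⁻¹ * (h * u - u * h) := by
            rw [mul_sub, ← mul_assoc, ← mul_assoc, Units.inv_mul, one_mul, mul_assoc]
        _ = ↑u⁻¹ * (h * j - j * h) := by rw [hu]; noncomm_ring
    rw [this]
    exact (jacRad R).mul_mem_left _
      (sub_mem ((jacRad R).mul_mem_left h hj) ((jacRad R).mul_mem_right h hj))
  refine ⟨↑u⁻¹ * h * u, ↑u⁻¹ * h * b, ?_, ?_, ?_⟩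
  · have hh' : ∀ y, h * (h * y) = h * y := fun y => by rw [← mul_assoc, hh.eq]
    simp [IsIdempotentElem, mul_assoc, hh']
  · rw [mul_assoc _ h, hhu, mul_assoc, mul_assoc, mul_assoc]
  · have : a - a * (↑u⁻¹ * h * u) =
        (a - a * b * a) - a * (h - b * a) - a * (↑u⁻¹ * h * u - h) := by noncomm_ring
    rw [this]
    exact sub_mem (sub_mem hb ((jacRad R).mul_mem_left a hhx)) ((jacRad R).mul_mem_left a he)

end Jacobson

section CSRickartRing

variable {R : Type*} [Ring R]

theorem isCompl_idealGen_one_sub {e : R} (he : IsIdempotentElem e) :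
    IsCompl (idealGen R e) (idealGen R (1 - e)) := by
  have hp : IsIdempotentElem (toSpanSingleton R R e) :=
    LinearMap.ext fun x => by simp [mul_assoc, he.eq]
  have h1 : toSpanSingleton R R (1 - e) = 1 - toSpanSingleton R R e :=
    LinearMap.ext fun x => by simp [mul_sub]
  rw [idealGen, idealGen, h1, ← LinearMap.IsIdempotentElem.ker_eq_range_one_sub hp]
  exact LinearMap.IsIdempotentElem.isCompl hp

theorem exists_idempotent_of_isDirectSummand {N : Submodule R R} (h : IsDirectSummand N) :
    ∃ g : R, IsIdempotentElem g ∧ g ∈ N ∧ ∀ u ∈ N, u * g = u := by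
  obtain ⟨K, hK⟩ := h
  obtain ⟨g, hg, k, hk, hgk⟩ := Submodule.mem_sup.1 (hK.sup_eq_top ▸ Submodule.mem_top (x := 1))
  have hfix : ∀ u ∈ N, u * g = u := fun u hu => by
    have huk : u * k ∈ N ⊓ K := by
      have : u * k = u - u * g := by rw [eq_sub_iff_add_eq, add_comm, ← mul_add, hgk, mul_one]
      exact ⟨this ▸ N.sub_mem hu (N.smul_mem u hg), K.smul_mem u hk⟩
    rw [hK.inf_eq_bot, Submodule.mem_bot] at huk
    calc u * g = u * g + u * k := by rw [huk, add_zero]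
      _ = u := by rw [← mul_add, hgk, mul_one]
  exact ⟨g, hfix g hg, hg, hfix⟩

/-- `R e a ≅ R e` via right multiplication by `a`, so C₂ makes `R e a` a direct summand `R g`. -/
theorem exists_idempotent_of_isC2 (hC2 : IsC2 R R) {e a : R} (he : IsIdempotentElem e)
    (hinj : ∀ r : R, r * e * a = 0 → r * e = 0) :
    ∃ g d : R, IsIdempotentElem g ∧ g = d * e * a ∧ e * a * g = e * a := by
  let φ := toSpanSingleton R R a ∘ₗ (idealGen R e).subtype
  have hφ : Function.Injective φ := by
    refine (injective_iff_map_eq_zero φ).2 fun ⟨x, r, hr⟩ hx => ?_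
    simp only [toSpanSingleton_apply, smul_eq_mul] at hr
    subst hr
    exact Subtype.ext (hinj r (by simpa [φ] using hx))
  obtain ⟨g, hg, ⟨⟨x, r, rfl⟩, rfl⟩, hfix⟩ := exists_idempotent_of_isDirectSummand
    (hC2 (range φ) _ ⟨_, isCompl_idealGen_one_sub he⟩ ⟨(LinearEquiv.ofInjective φ hφ).symm⟩)
  refine ⟨_, r, hg, by simp [φ], hfix _ ⟨⟨e, 1, by simp⟩, by simp [φ]⟩⟩

theorem mem_jacRad_of_mem_singularSubmodule (hC2 : IsC2 R R) {z : R}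
    (hz : z ∈ singularSubmodule R R) : z ∈ jacRad R := by
  -- `R (1 + y z) ≅ R` is a summand `R g` by C₂, and `1 - g` is a singular idempotent
  refine Ideal.mem_jacobson_iff.2 fun y => ?_
  have hw : -(y * z) ∈ singularSubmodule R R := neg_mem (Submodule.smul_mem _ y hz)
  obtain ⟨g, d, hg, hgd, hfix⟩ := exists_idempotent_of_isC2 hC2 (e := 1) (a := 1 + y * z)
    IsIdempotentElem.one fun r hr => eq_zero_of_eq_mul_of_mem_singularSubmodule hw (by
      rw [mul_one] at hr ⊢
      rw [mul_neg, eq_neg_iff_add_eq_zero, ← hr]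
      noncomm_ring)
  rw [mul_one] at hgd
  rw [one_mul] at hfix
  have h1 : 1 - g = -(y * z) * (1 - g) := by
    have : (1 + y * z) * (1 - g) = 0 := by rw [mul_sub, mul_one, hfix, sub_self]
    rw [neg_mul, eq_neg_iff_add_eq_zero, ← this]
    noncomm_ring
  have hg1 : 1 - g = 0 :=
    eq_zero_of_eq_mul_of_mem_singularSubmodule (mul_mem_singularSubmodule hw (1 - g))
      (by rw [← h1, hg.one_sub.eq])
  refine ⟨d, ?_⟩
  rw [Submodule.mem_bot]
  calc d * y * z + d - 1 = d * (1 + y * z) - 1 := by noncomm_ring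
    _ = 0 := by rw [← hgd, ← neg_sub, hg1, neg_zero]

theorem exists_idempotent_sub_mul_mem_singularSubmodule (hCS : IsCSRickart R R) (hC2 : IsC2 R R)
    (a : R) : ∃ g d : R, IsIdempotentElem g ∧ g = d * a ∧ a - a * g ∈ singularSubmodule R R := by
  -- `ker (· * a)` is essential in `R f`: so `f a` is singular, and `· * a` is injective on
  -- `R (1 - f)`, whose image is then a summand `R g` by C₂
  obtain ⟨e, he, hess⟩ := hCS (toSpanSingleton R R a)
  have hef : ∀ x, e x = x * e 1 := fun x => by
    rw [← smul_eq_mul, ← map_smul, smul_eq_mul, mul_one]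
  set f := e 1
  have hf : IsIdempotentElem f := by
    change e 1 * e 1 = e 1
    rw [← hef, ← Module.End.mul_apply, he.eq]
  have hfa : f * a ∈ singularSubmodule R R :=
    (hess.comap e le_rfl).mono fun r (hr : e r * a = 0) =>
      show r * (f * a) = 0 by rwa [← mul_assoc, ← hef]
  have hinj : ∀ r : R, r * (1 - f) * a = 0 → r * (1 - f) = 0 := fun r hr => by
    have hmem : r * (1 - f) ∈ range e := hess.1 hr
    rw [LinearMap.IsIdempotentElem.mem_range_iff he, hef, mul_assoc, sub_mul, one_mul, hf.eq,
      sub_self, mul_zero] at hmem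
    exact hmem.symm
  obtain ⟨g, d, hg, hgd, hfix⟩ := exists_idempotent_of_isC2 hC2 hf.one_sub hinj
  refine ⟨g, d * (1 - f), hg, by rw [hgd, mul_assoc], ?_⟩
  have : a - a * g = f * a * (1 - g) := by
    calc a - a * g = f * a * (1 - g) + ((1 - f) * a - (1 - f) * a * g) := by noncomm_ring
      _ = f * a * (1 - g) := by rw [hfix, sub_self, add_zero]
  rw [this]
  exact mul_mem_singularSubmodule hfa _

theorem isSemiregularRing_and_jacEqSingular (hCS : IsCSRickart R R) (hC2 : IsC2 R R) :
    IsSemiregularRing R ∧ JacEqSingular R := by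
  have hZJ : ∀ {z : R}, z ∈ singularSubmodule R R → z ∈ jacRad R :=
    mem_jacRad_of_mem_singularSubmodule hC2
  refine ⟨⟨fun a => ?_, fun a ha => ?_⟩, fun a => ⟨fun ha => ?_, hZJ⟩⟩
  · obtain ⟨g, d, -, rfl, hZ⟩ := exists_idempotent_sub_mul_mem_singularSubmodule hCS hC2 a
    exact ⟨d, by simpa [mul_assoc] using hZJ hZ⟩
  · obtain ⟨g, d, hg, rfl, hZ⟩ := exists_idempotent_sub_mul_mem_singularSubmodule hCS hC2 a
    refine exists_idempotent_sub_mem_jacRad_of_sub_mem_jacRad hg (hZJ hZ) ?_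
    have : d * a - d * a * a = d * (a - a * a) := by noncomm_ring
    rw [this]
    exact (jacRad R).mul_mem_left d ha
  · obtain ⟨g, d, hg, rfl, hZ⟩ := exists_idempotent_sub_mul_mem_singularSubmodule hCS hC2 a
    have hg0 := IsIdempotentElem.eq_zero_of_mem_jacRad hg ((jacRad R).mul_mem_left d ha)
    rw [hg0, mul_zero, sub_zero] at hZ
    exact hZ

end CSRickartRing

theorem isIdempotentElem_add_sub_mul_of_mul_eq_zero {A : Type*} [Ring A] {p q : A}
    (hp : IsIdempotentElem p) (hq : IsIdempotentElem q) (hpq : p * q = 0) :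
    IsIdempotentElem (p + q - q * p) := by
  have : (p + q - q * p) * (p + q - q * p) = p * p + p * q - p * q * p + q * p + q * q -
      q * q * p - q * (p * p) - q * (p * q) + q * (p * q) * p := by noncomm_ring
  rw [IsIdempotentElem, this, hp.eq, hq.eq, hpq]
  noncomm_ring

section SummandModSingular

variable {R : Type*} [Ring R] {M M' : Type*} [AddCommGroup M] [Module R M]
  [AddCommGroup M'] [Module R M']

variable (R) in
/-- `N` splits as `range p ⊕ (N ⊓ ker p)` for an idempotent `p`, with singular second summand. -/
def IsSummandModSingular (N : Submodule R M) : Prop :=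
  ∃ p : Module.End R M, IsIdempotentElem p ∧ range p ≤ N ∧
    N.map (1 - p) ≤ singularSubmodule R M

theorem isSummandModSingular_of_idempotents {N : Submodule R M} {q₀ q₁ : Module.End R M}
    (h₀ : IsIdempotentElem q₀) (h₁ : IsIdempotentElem q₁) (hr₀ : range q₀ ≤ N)
    (hr₁ : range q₁ ≤ N.map (1 - q₀))
    (hZ : (N.map (1 - q₀)).map (1 - q₁) ≤ singularSubmodule R M) :
    IsSummandModSingular R N := by
  have horth : q₀ * q₁ = 0 := LinearMap.ext fun x => by
    obtain ⟨y, -, hy⟩ := hr₁ ⟨x, rfl⟩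
    rw [Module.End.mul_apply, ← hy, ← Module.End.mul_apply, mul_sub, mul_one, h₀.eq, sub_self]
    rfl
  have hcompl : 1 - (q₀ + q₁ - q₁ * q₀) = (1 - q₁) * (1 - q₀) := by noncomm_ring
  refine ⟨_, isIdempotentElem_add_sub_mul_of_mul_eq_zero h₀ h₁ horth, ?_, ?_⟩
  · rintro _ ⟨x, rfl⟩
    have hx : (q₀ + q₁ - q₁ * q₀) x = q₀ x + q₁ ((1 - q₀) x) := by
      simp only [LinearMap.sub_apply, LinearMap.add_apply, Module.End.mul_apply,
        Module.End.one_apply, map_sub]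
      abel
    rw [hx]
    obtain ⟨y, hy, hy'⟩ := hr₁ ⟨(1 - q₀) x, rfl⟩
    refine add_mem (hr₀ ⟨x, rfl⟩) (hy' ▸ ?_)
    rw [LinearMap.sub_apply, Module.End.one_apply]
    exact N.sub_mem hy (hr₀ ⟨y, rfl⟩)
  · rwa [hcompl, Module.End.mul_eq_comp, Submodule.map_comp]

theorem isSummandModSingular_of_fg (hcyc : ∀ x : M, IsSummandModSingular R (R ∙ x))
    {N : Submodule R M} (hN : N.FG) : IsSummandModSingular R N := by
  -- the induction step has to split the image of a summand under `1 - p`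
  suffices ∀ g : Module.End R M, IsSummandModSingular R (N.map g) by
    simpa [Module.End.one_eq_id] using this 1
  induction N, hN using Submodule.fg_induction with
  | singleton x => intro g; rw [Submodule.map_span, Set.image_singleton]; exact hcyc (g x)
  | sup A B _ _ hA hB =>
    intro g
    obtain ⟨p, hp, hpA, hpZ⟩ := hA g
    obtain ⟨q, hq, hqB, hqZ⟩ := hB ((1 - p) * g)
    rw [Module.End.mul_eq_comp, Submodule.map_comp] at hqB hqZ
    rw [Submodule.map_sup]
    refine isSummandModSingular_of_idempotents hp hq (hpA.trans le_sup_left)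
      (hqB.trans (Submodule.map_mono le_sup_right)) ?_
    rw [Submodule.map_sup, Submodule.map_sup]
    exact sup_le ((Submodule.map_mono hpZ).trans (map_singularSubmodule_le _)) hqZ

theorem exists_idempotent_lift_of_retract [Module.Projective R M] (π : M →ₗ[R] M')
    (ι : M' →ₗ[R] M) (hπι : π ∘ₗ ι = LinearMap.id) {N : Submodule R M}
    (h : IsSummandModSingular R (N.map π)) :
    ∃ q : Module.End R M, IsIdempotentElem q ∧ range q ≤ N ∧
      (N.map (1 - q)).map π ≤ singularSubmodule R M' := by
  obtain ⟨p', hp', hp'N, hp'Z⟩ := h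
  have hπι' : ∀ y, π (ι y) = y := LinearMap.congr_fun hπι
  -- `p` maps `N` onto its range; projectivity lifts `p` through `p|_N` to `k`, and `q = k p`
  set p := ι ∘ₗ p' ∘ₗ π
  have hπp : ∀ y, π (p y) = p' (π y) := fun y => hπι' _
  have hpp : ∀ y, p (p y) = p y := fun y => by
    simp only [p, LinearMap.comp_apply, hπι', ← Module.End.mul_apply, hp'.eq]
  have hsurj : ∀ y, ∃ x ∈ N, p x = p y := fun y => by
    obtain ⟨x, hx, hxy⟩ := hp'N ⟨π y, rfl⟩
    refine ⟨x, hx, ?_⟩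
    simp only [p, LinearMap.comp_apply, hxy, ← Module.End.mul_apply, hp'.eq]
  obtain ⟨k, hk⟩ := Module.projective_lifting_property
    (LinearMap.codRestrict (range p) (p ∘ₗ N.subtype) fun x => ⟨x, rfl⟩) p.rangeRestrict
    fun ⟨_, y, rfl⟩ => let ⟨x, hx, hxy⟩ := hsurj y; ⟨⟨x, hx⟩, Subtype.ext hxy⟩
  have hpk : ∀ y, p (k y) = p y := fun y => congrArg Subtype.val (LinearMap.congr_fun hk y)
  refine ⟨N.subtype ∘ₗ k ∘ₗ p, LinearMap.ext fun y => ?_, ?_, ?_⟩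
  · simp only [Module.End.mul_apply, LinearMap.comp_apply, Submodule.subtype_apply, hpk, hpp]
  · rintro _ ⟨y, rfl⟩
    exact (k (p y)).2
  · rintro _ ⟨_, ⟨x, hx, rfl⟩, rfl⟩
    have hker : p' (π ((1 - N.subtype ∘ₗ k ∘ₗ p) x)) = 0 := by
      simp only [← hπp, LinearMap.sub_apply, Module.End.one_apply, LinearMap.comp_apply,
        Submodule.subtype_apply, map_sub, hpk, hpp, sub_self]
    have hmem : π ((1 - N.subtype ∘ₗ k ∘ₗ p) x) ∈ N.map π :=
      ⟨_, N.sub_mem hx (k (p x)).2, rfl⟩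
    have := hp'Z ⟨_, hmem, rfl⟩
    rwa [LinearMap.sub_apply, Module.End.one_apply, hker, sub_zero] at this

theorem isSummandModSingular_prod {M₁ M₂ : Type*} [AddCommGroup M₁] [Module R M₁]
    [AddCommGroup M₂] [Module R M₂] [Module.Projective R M₁] [Module.Projective R M₂]
    (h₁ : ∀ N : Submodule R M₁, N.FG → IsSummandModSingular R N)
    (h₂ : ∀ N : Submodule R M₂, N.FG → IsSummandModSingular R N)
    {N : Submodule R (M₁ × M₂)} (hN : N.FG) : IsSummandModSingular R N := by
  -- split off the `M₂`-component first, then the `M₁`-component of what is left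
  obtain ⟨q₀, hq₀, hq₀N, hq₀Z⟩ := exists_idempotent_lift_of_retract (snd R M₁ M₂)
    (inr R M₁ M₂) (snd_comp_inr R M₁ M₂) (h₂ _ (hN.map _))
  obtain ⟨q₁, hq₁, hq₁N, hq₁Z⟩ := exists_idempotent_lift_of_retract (fst R M₁ M₂)
    (inl R M₁ M₂) (fst_comp_inl R M₁ M₂) (h₁ _ ((hN.map (1 - q₀)).map _))
  refine isSummandModSingular_of_idempotents hq₀ hq₁ hq₀N hq₁N ?_
  rintro _ ⟨z, hz, rfl⟩
  have hw : (1 - q₁) z ∈ N.map (1 - q₀) := (N.map (1 - q₀)).sub_mem hz (hq₁N ⟨z, rfl⟩)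
  exact Prod.mk_mem_singularSubmodule (hq₁Z ⟨_, ⟨z, hz, rfl⟩, rfl⟩) (hq₀Z ⟨_, hw, rfl⟩)

theorem isSummandModSingular_of_retract (π : M →ₗ[R] M') (ι : M' →ₗ[R] M)
    (hπι : π ∘ₗ ι = LinearMap.id) (h : ∀ N : Submodule R M, N.FG → IsSummandModSingular R N)
    {N : Submodule R M'} (hN : N.FG) : IsSummandModSingular R N := by
  obtain ⟨p, hp, hpN, hpZ⟩ := h _ (hN.map ι)
  have hπι' : ∀ y, π (ι y) = y := LinearMap.congr_fun hπι
  have hιπ : ∀ x, ι (π (p x)) = p x := fun x => by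
    obtain ⟨y, -, hy⟩ := hpN ⟨x, rfl⟩
    rw [← hy, hπι']
  refine ⟨π ∘ₗ p ∘ₗ ι, LinearMap.ext fun y => ?_, ?_, ?_⟩
  · simp only [Module.End.mul_apply, LinearMap.comp_apply, hιπ, ← Module.End.mul_apply p, hp.eq]
  · rintro _ ⟨y, rfl⟩
    obtain ⟨x, hx, hxy⟩ := hpN ⟨ι y, rfl⟩
    simpa [← hxy, hπι'] using hx
  · rintro _ ⟨y, hy, rfl⟩
    have := map_mem_singularSubmodule π (hpZ ⟨ι y, ⟨y, hy, rfl⟩, rfl⟩)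
    simpa [hπι'] using this

theorem isSummandModSingular_span_singleton (hsr : IsSemiregularRing R) (hJZ : JacEqSingular R)
    (a : R) : IsSummandModSingular R (R ∙ a) := by
  obtain ⟨e, c, he, rfl, hJ⟩ := exists_idempotent_sub_mul_mem_jacRad hsr a
  refine ⟨toSpanSingleton R R (c * a), LinearMap.ext fun x => by simp [mul_assoc, he.eq], ?_, ?_⟩
  · rintro _ ⟨x, rfl⟩
    exact Submodule.mem_span_singleton.2 ⟨x * c, by simp [mul_assoc]⟩
  · rintro _ ⟨_, hx, rfl⟩
    obtain ⟨r, rfl⟩ := Submodule.mem_span_singleton.1 hx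
    have : (1 - toSpanSingleton R R (c * a)) (r • a) = r • (a - a * (c * a)) := by
      simp [mul_sub, mul_assoc]
    rw [this]
    exact Submodule.smul_mem _ r ((hJZ _).1 hJ)

theorem isSummandModSingular_of_fg_pi (hsr : IsSemiregularRing R) (hJZ : JacEqSingular R) :
    ∀ (n : ℕ) (N : Submodule R (Fin n → R)), N.FG → IsSummandModSingular R N
  | 0, N, _ => ⟨0, IsIdempotentElem.zero, by simp, fun x _ => Subsingleton.elim 0 x ▸ zero_mem _⟩
  | n + 1, _, hN =>
    isSummandModSingular_of_retract (Fin.consLinearEquiv R fun _ => R).toLinearMap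
      (Fin.consLinearEquiv R fun _ => R).symm.toLinearMap (by ext; simp)
      (fun _ hN' => isSummandModSingular_prod
        (fun _ => isSummandModSingular_of_fg (isSummandModSingular_span_singleton hsr hJZ))
        (isSummandModSingular_of_fg_pi hsr hJZ n) hN') hN

theorem isSummandModSingular_of_fg_projective (hsr : IsSemiregularRing R) (hJZ : JacEqSingular R)
    [Module.Finite R M] [Module.Projective R M] {N : Submodule R M} (hN : N.FG) :
    IsSummandModSingular R N := by
  obtain ⟨n, π, ι, -, -, hπι⟩ := Module.Finite.exists_comp_eq_id_of_projective R M
  exact isSummandModSingular_of_retract π ι hπι (isSummandModSingular_of_fg_pi hsr hJZ n) hN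

end SummandModSingular

section Projective

variable {R : Type*} [Ring R] {M M' : Type*} [AddCommGroup M] [Module R M]
  [AddCommGroup M'] [Module R M'] [Module.Finite R M] [Module.Projective R M]

theorem essentialIn_ker_of_range_le_singularSubmodule (f : M →ₗ[R] M')
    (hf : range f ≤ singularSubmodule R M') : EssentialIn (ker f) ⊤ := by
  obtain ⟨n, π, ι, -, -, hπι⟩ := Module.Finite.exists_comp_eq_id_of_projective R M
  let y : Fin n → M' := fun i => f (π fun j => if i = j then 1 else 0)
  have hy : ∀ i, EssentialIn (ker (toSpanSingleton R M' (y i))) ⊤ :=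
    fun i => hf (LinearMap.mem_range_self _ _)
  -- `f x = ∑ i, (ι x) i • y i`, so `x` lies in `ker f` once every `(ι x) i` annihilates `y i`
  refine (essentialIn_top_iInf fun i =>
    (hy i).comap (proj (φ := fun _ => R) i ∘ₗ ι) le_top).mono fun x hx => ?_
  have hx' : ∀ i, ι x i • y i = 0 := fun i => (Submodule.mem_iInf _).1 hx i
  rw [mem_ker, ← show π (ι x) = x from LinearMap.congr_fun hπι x, ← LinearMap.comp_apply f,
    pi_apply_eq_sum_univ]
  exact Finset.sum_eq_zero fun i _ => hx' i

theorem eq_zero_of_isIdempotentElem_of_range_le_singularSubmodule {q : Module.End R M}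
    (hq : IsIdempotentElem q) (hZ : range q ≤ singularSubmodule R M) : q = 0 :=
  range_eq_bot.1 ((essentialIn_ker_of_range_le_singularSubmodule q hZ).2 _ le_top
    (LinearMap.IsIdempotentElem.isCompl hq).symm.inf_eq_bot)

theorem isCSRickart_of_forall_fg (h : ∀ N : Submodule R M, N.FG → IsSummandModSingular R N) :
    IsCSRickart R M := by
  intro φ
  obtain ⟨p, hp, hpφ, hpZ⟩ := h (range φ) (by rw [range_eq_map]; exact Module.Finite.fg_top.map φ)
  obtain ⟨s, hs⟩ := Module.projective_lifting_property φ.rangeRestrict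
    (LinearMap.codRestrict (range φ) p fun x => hpφ ⟨x, rfl⟩) φ.surjective_rangeRestrict
  have hφs : ∀ x, φ (s x) = p x := fun x => congrArg Subtype.val (LinearMap.congr_fun hs x)
  have hpp : ∀ x, p (p x) = p x := fun x => by rw [← Module.End.mul_apply, hp.eq]
  set e := s ∘ₗ p ∘ₗ φ
  have he : IsIdempotentElem e := LinearMap.ext fun x => by
    simp only [e, Module.End.mul_apply, comp_apply, hφs, hpp]
  refine ⟨1 - e, he.one_sub, ?_⟩
  rw [← LinearMap.IsIdempotentElem.ker_eq_range_one_sub he]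
  -- `ker e ⊓ ker ((1 - p) ∘ φ) ≤ ker φ`, and the second kernel is essential
  have hψ := essentialIn_ker_of_range_le_singularSubmodule ((1 - p) ∘ₗ φ) (by
    rintro _ ⟨x, rfl⟩
    exact hpZ ⟨φ x, ⟨x, rfl⟩, rfl⟩)
  refine ⟨fun x (hx : φ x = 0) => show s (p (φ x)) = 0 by rw [hx, map_zero, map_zero],
    fun K hK hKφ => hψ.2 K le_top (eq_bot_iff.2 ?_)⟩
  rintro x ⟨hxψ : φ x - p (φ x) = 0, hxK⟩
  have hφx : φ x = 0 := by
    calc φ x = p (p (φ x)) := by rw [hpp, ← sub_eq_zero.1 hxψ]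
      _ = φ (e x) := (hφs _).symm
      _ = 0 := by rw [show e x = 0 from hK hxK, map_zero]
  exact hKφ ▸ ⟨hφx, hxK⟩

theorem isC2_of_forall_fg (h : ∀ N : Submodule R M, N.FG → IsSummandModSingular R N) :
    IsC2 R M := by
  rintro N D ⟨D', hDD'⟩ ⟨α⟩
  have hD : D.projectionOnto D' hDD' ∘ₗ D.subtype = LinearMap.id :=
    LinearMap.ext (Submodule.projectionOnto_apply_left hDD')
  have : Module.Projective R D := .of_split _ _ hD
  have : Module.Finite R D := .of_surjective _ (LinearMap.surjective_of_comp_eq_id _ _ hD)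
  have : Module.Projective R N := .of_equiv' α.symm
  have : Module.Finite R N := .equiv α.symm
  obtain ⟨p, hp, hpN, hpZ⟩ := h N (Module.Finite.iff_fg.1 inferInstance)
  -- as a module, `N ≅ D` is finitely generated projective, so the idempotent `1 - p` of `N`
  -- with singular range vanishes
  let κ : Module.End R N := (1 - p).restrict fun x hx => N.sub_mem hx (hpN ⟨x, rfl⟩)
  have hκ : κ = 0 := by
    refine eq_zero_of_isIdempotentElem_of_range_le_singularSubmodule ?_ ?_
    · exact LinearMap.ext fun x => Subtype.ext (show (1 - p) ((1 - p) (x : M)) = (1 - p) x by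
        rw [← Module.End.mul_apply, hp.one_sub.eq])
    · rintro _ ⟨x, rfl⟩
      exact mem_singularSubmodule_of_injective N.injective_subtype (hpZ ⟨x, x.2, rfl⟩)
  have hNp : N = range p := le_antisymm (fun x hx => by
    have hx0 : x - p x = 0 := congrArg Subtype.val (LinearMap.congr_fun hκ ⟨x, hx⟩)
    exact ⟨x, (sub_eq_zero.1 hx0).symm⟩) hpN
  exact ⟨ker p, hNp ▸ LinearMap.IsIdempotentElem.isCompl hp⟩

end Projective

universe u

/-- `R` is semiregular with `J(R) = Z(R)` iff every finitely generated
projective `R`-module is a CS-Rickart module which is also a C₂ module. -/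
theorem semiregular_iff_fg_projective_csRickart_c2
    {R : Type u} [Ring R] :
    (IsSemiregularRing R ∧ JacEqSingular R) ↔
    (∀ (P : Type u) [AddCommGroup P] [Module R P],
      Module.Finite R P → Module.Projective R P → IsCSRickart R P ∧ IsC2 R P) := by
  refine ⟨fun ⟨hsr, hJZ⟩ P _ _ _ _ => ?_, fun h => ?_⟩
  · have hP : ∀ N : Submodule R P, N.FG → IsSummandModSingular R N :=
      fun _ => isSummandModSingular_of_fg_projective hsr hJZ
    exact ⟨isCSRickart_of_forall_fg hP, isC2_of_forall_fg hP⟩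
  · obtain ⟨hCS, hC2⟩ := h R inferInstance inferInstance
    exact isSemiregularRing_and_jacEqSingular hCS hC2

end CSRickartPaper
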